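/- arXiv:2401.08343 — 3 statements merged into one kernel-verified Lean document; each statement's English description precedes it below -/
import Mathlib

section
/- Let V_n denote the space of functions of the form z^n p_n(z) + ... + z p_1(z) + p_0(z) where each p_i is 2-periodic. For every ψ ∈ V_n there exists φ ∈ V_{n+1} such that φ(z+1) + φ(z) = ψ(z) for all z. -/
/-- Membership in `V_n`: quasi-polynomials of degree ≤ n with continuous 2-periodic
coefficients. -/
def QuasiPoly (n : ℕ) (ψ : ℝ → ℂ) : Prop :=
  ∃ p : Fin (n + 1) → (ℝ → ℂ),
    (∀ i, Continuous (p i)) ∧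
    (∀ i, ∀ z : ℝ, p i (z + 2) = p i z) ∧
    (∀ z : ℝ, ψ z = ∑ i : Fin (n + 1), (z : ℂ) ^ (i : ℕ) * p i z)

/-!
Write each 2-periodic coefficient as `p = a + b` with `a` 1-periodic and `b` 1-antiperiodic.
On `P(z) a(z)` the operator `T + 1` acts as `P ↦ P(X + 1) + P`, which is invertible on polynomials
of degree `≤ m`; on `P(z) b(z)` it acts as the difference `P ↦ P - P(X + 1)`, which maps degree
`m + 1` onto degree `m` (a preimage of `X ^ m` is a multiple of the Bernoulli polynomial
`B_{m+1}`). This resonance is why the solution lies in `V_{n+1}` rather than `V_n`.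
-/

open Polynomial

namespace Polynomial

variable {K : Type*} [Field K]

theorem eq_zero_of_taylor_add_self_eq_zero [NeZero (2 : K)] {r : K} {f : K[X]}
    (h : taylor r f + f = 0) : f = 0 := by
  have hlc : f.leadingCoeff = -f.leadingCoeff := by
    rw [← leadingCoeff_neg, ← eq_neg_of_add_eq_zero_left h, leadingCoeff_taylor]
  rw [eq_neg_iff_add_eq_zero, ← two_mul, mul_eq_zero, leadingCoeff_eq_zero] at hlc
  exact hlc.resolve_left two_ne_zero

theorem exists_natDegree_le_taylor_add_self_eq [NeZero (2 : K)] (r : K) (q : K[X]) :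
    ∃ f : K[X], f.natDegree ≤ q.natDegree ∧ taylor r f + f = q := by
  have hmem : ∀ f : K[X], f ∈ K[X]_(q.natDegree + 1) ↔ f.natDegree ≤ q.natDegree := by
    intro f
    rw [degreeLT_succ_eq_degreeLE, mem_degreeLE, natDegree_le_iff_degree_le]
  let L : K[X]_(q.natDegree + 1) →ₗ[K] K[X]_(q.natDegree + 1) :=
    (taylor r + LinearMap.id).restrict fun f hf => add_mem (taylor_mem_degreeLT.2 hf) hf
  have hL : Function.Injective L := by
    rw [← LinearMap.ker_eq_bot, LinearMap.ker_eq_bot']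
    exact fun f hf => Subtype.ext (eq_zero_of_taylor_add_self_eq_zero (congrArg Subtype.val hf))
  obtain ⟨f, hf⟩ := LinearMap.injective_iff_surjective.1 hL ⟨q, (hmem q).2 le_rfl⟩
  exact ⟨f, (hmem f).1 f.2, congrArg Subtype.val hf⟩

theorem natDegree_bernoulli_le (n : ℕ) : (bernoulli n).natDegree ≤ n :=
  natDegree_le_iff_coeff_eq_zero.2 fun i hi => by rw [coeff_bernoulli, if_neg hi.not_ge]

theorem exists_natDegree_le_sub_taylor_one_eq_X_pow [CharZero K] (n : ℕ) :
    ∃ g : K[X], g.natDegree ≤ n + 1 ∧ g - taylor 1 g = X ^ n := by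
  set B := (bernoulli (n + 1)).map (algebraMap ℚ K)
  have hB : taylor 1 B = B + C ((n : K) + 1) * X ^ n := by
    have := congrArg (map (algebraMap ℚ K)) (bernoulli_comp_one_add_X (n + 1))
    rw [map_comp] at this
    simpa [taylor_apply, add_comm X] using this
  refine ⟨C (-((n : K) + 1)⁻¹) * B, ?_, ?_⟩
  · exact (natDegree_C_mul_le _ _).trans (natDegree_map_le.trans (natDegree_bernoulli_le _))
  · have hn : (n : K) + 1 ≠ 0 := by exact_mod_cast n.succ_ne_zero
    have hC : C (-((n : K) + 1)⁻¹) * C ((n : K) + 1) = -1 := by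
      rw [← C_mul, neg_mul, inv_mul_cancel₀ hn, C_neg, C_1]
    rw [taylor_mul, taylor_C, hB]
    linear_combination (-X ^ n) * hC

end Polynomial

open Function

namespace QuasiPoly

variable {n : ℕ}

theorem zero : QuasiPoly n 0 :=
  ⟨0, fun _ => continuous_const, fun _ _ => rfl, fun z => by simp⟩

theorem add {f g : ℝ → ℂ} (hf : QuasiPoly n f) (hg : QuasiPoly n g) : QuasiPoly n (f + g) := by
  obtain ⟨p, hpc, hpp, hpf⟩ := hf
  obtain ⟨q, hqc, hqp, hqg⟩ := hg
  refine ⟨p + q, fun i => (hpc i).add (hqc i), fun i z => by simp [hpp, hqp], fun z => ?_⟩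
  simp [hpf, hqg, mul_add, Finset.sum_add_distrib]

theorem sum {ι : Type*} (s : Finset ι) {f : ι → ℝ → ℂ} (h : ∀ i ∈ s, QuasiPoly n (f i)) :
    QuasiPoly n (∑ i ∈ s, f i) := by
  classical
  induction s using Finset.induction_on with
  | empty => exact zero
  | insert i s hi ih =>
    rw [Finset.sum_insert hi]
    exact (h i (Finset.mem_insert_self i s)).add (ih fun j hj => h j (Finset.mem_insert_of_mem hj))

theorem polynomial_eval_mul {P : ℂ[X]} (hP : P.natDegree ≤ n) {a : ℝ → ℂ} (ha : Continuous a)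
    (hper : Periodic a 2) : QuasiPoly n fun z => P.eval (z : ℂ) * a z := by
  refine ⟨fun i z => P.coeff i * a z, fun i => continuous_const.mul ha,
    fun i z => congrArg _ (hper z), fun z => ?_⟩
  dsimp only
  rw [eval_eq_sum_range' (Nat.lt_succ_of_le hP), Finset.sum_mul,
    ← Fin.sum_univ_eq_sum_range (fun i => P.coeff i * (z : ℂ) ^ i * a z)]
  exact Finset.sum_congr rfl fun i _ => by ring

end QuasiPoly

theorem exists_quasiPoly_shift_add_eq_pow_mul {n i : ℕ} (hi : i ≤ n) {p : ℝ → ℂ}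
    (hc : Continuous p) (hp : Periodic p 2) :
    ∃ φ : ℝ → ℂ, QuasiPoly (n + 1) φ ∧ ∀ z : ℝ, φ (z + 1) + φ z = (z : ℂ) ^ i * p z := by
  set a : ℝ → ℂ := fun z => (p z + p (z + 1)) / 2
  set b : ℝ → ℂ := fun z => (p z - p (z + 1)) / 2
  have hp1 : ∀ z, p (z + 1 + 1) = p z := fun z => by rw [add_assoc, one_add_one_eq_two, hp]
  have ha : Periodic a 1 := fun z => by simp only [a, hp1]; ring
  have hb : Antiperiodic b 1 := fun z => by simp only [b, hp1]; ring
  have ha2 : Periodic a 2 := one_add_one_eq_two (R := ℝ) ▸ ha.add_period ha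
  have hb2 : Periodic b 2 := mul_one (2 : ℝ) ▸ hb.periodic_two_mul
  obtain ⟨f, hf_deg, hf⟩ := exists_natDegree_le_taylor_add_self_eq (1 : ℂ) (X ^ i)
  obtain ⟨g, hg_deg, hg⟩ := exists_natDegree_le_sub_taylor_one_eq_X_pow (K := ℂ) i
  refine ⟨fun z => f.eval (z : ℂ) * a z + g.eval (z : ℂ) * b z, ?_, fun z => ?_⟩
  · have hf_deg' : f.natDegree ≤ n + 1 := hf_deg.trans (by rw [natDegree_X_pow]; omega)
    exact (QuasiPoly.polynomial_eval_mul hf_deg' (by fun_prop) ha2).add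
      (QuasiPoly.polynomial_eval_mul (by omega) (by fun_prop) hb2)
  · have hfz := congrArg (Polynomial.eval (z : ℂ)) hf
    have hgz := congrArg (Polynomial.eval (z : ℂ)) hg
    simp only [eval_add, eval_sub, taylor_eval, eval_X_pow] at hfz hgz
    simp only [ha z, hb z, Complex.ofReal_add, Complex.ofReal_one]
    linear_combination a z * hfz + b z * hgz

/-- For every `ψ ∈ V_n` there exists `φ ∈ V_{n+1}` with `(T+1)φ = ψ`. -/
theorem quasiPoly_surjective_shift_plus_one (n : ℕ) (ψ : ℝ → ℂ) (hψ : QuasiPoly n ψ) :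
    ∃ φ : ℝ → ℂ, QuasiPoly (n + 1) φ ∧ ∀ z : ℝ, φ (z + 1) + φ z = ψ z := by
  obtain ⟨p, hc, hper, hrep⟩ := hψ
  choose φ hφ hshift using fun i : Fin (n + 1) =>
    exists_quasiPoly_shift_add_eq_pow_mul i.is_le (hc i) (hper i)
  refine ⟨∑ i, φ i, QuasiPoly.sum _ fun i _ => hφ i, fun z => ?_⟩
  simp only [Finset.sum_apply, ← Finset.sum_add_distrib, hshift, hrep]
end

section
/- Define polynomials Φ_n(z) ∈ ℚ[z] recursively by Φ_0 = 0, and for n ≥ 1 by the two conditions: Ψ_n := Φ_n(z+1) + Φ_n(z) satisfies Ψ_1' = 2, Ψ_n'(z) = ∑_{i=1}^{n-1} (Φ_i(z+1)Φ_{n-i}(z+1) - Φ_i(z)Φ_{n-i}(z)) for n ≥ 2, with the integration constants chosen so that Φ_n(1) + Φ_n(0) = 0 for all n. Then each Φ_n is a polynomial of degree exactly n, with leading coefficient 2^{1-n} C_{n-1}. -/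
open Polynomial Finset

private lemma auxXone_nd : ((X : Polynomial ℚ) + 1).natDegree = 1 := by
  rw [show ((X : Polynomial ℚ) + 1) = X + C 1 by simp]; exact natDegree_X_add_C 1

private lemma auxXone_monic : ((X : Polynomial ℚ) + 1).Monic := by
  rw [show ((X : Polynomial ℚ) + 1) = X + C 1 by simp]; exact monic_X_add_C 1

private lemma aux_comp_natDegree (p : Polynomial ℚ) :
    (p.comp (X + 1)).natDegree = p.natDegree := by
  simp [natDegree_comp, auxXone_nd]

private lemma aux_comp_leadingCoeff (p : Polynomial ℚ) :
    (p.comp (X + 1)).leadingCoeff = p.leadingCoeff := by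
  rw [leadingCoeff_comp (by rw [auxXone_nd]; norm_num), auxXone_monic.leadingCoeff]
  simp

private lemma aux_comp_degree (p : Polynomial ℚ) :
    (p.comp (X + 1)).degree = p.degree := by
  rcases eq_or_ne p 0 with rfl | hp
  · simp
  · have hc : p.comp (X + 1) ≠ 0 := by
      intro h
      apply hp
      have := aux_comp_leadingCoeff p
      rw [h, leadingCoeff_zero] at this
      exact leadingCoeff_eq_zero.mp this.symm
    rw [degree_eq_natDegree hp, degree_eq_natDegree hc, aux_comp_natDegree]

private lemma aux_comp_coeff (p : Polynomial ℚ) (m : ℕ) :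
    (p.comp (X + 1)).coeff m = ∑ k ∈ range (p.natDegree + 1), p.coeff k * (k.choose m : ℚ) := by
  rw [comp, eval₂_eq_sum_range, finset_sum_coeff]
  exact Finset.sum_congr rfl fun k _ => by rw [coeff_C_mul, coeff_X_add_one_pow]

private lemma aux_diff_coeff_high (g : Polynomial ℚ) {m : ℕ} (hm : g.natDegree ≤ m) :
    (g.comp (X + 1) - g).coeff m = 0 := by
  rw [coeff_sub, aux_comp_coeff]
  rw [Finset.sum_eq_single m]
  · simp
  · intro b hb hbm
    have : b < m := lt_of_le_of_ne (le_trans (Nat.lt_succ_iff.mp (Finset.mem_range.mp hb)) hm) hbm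
    rw [Nat.choose_eq_zero_of_lt this]; ring
  · intro hm'
    have : g.natDegree < m := by
      rcases lt_or_eq_of_le hm with h | h
      · exact h
      · exact absurd (Finset.mem_range.mpr (by omega)) hm'
    rw [coeff_eq_zero_of_natDegree_lt this]; ring

private lemma aux_diff_coeff_lead (g : Polynomial ℚ) {n : ℕ} (hn : 1 ≤ n)
    (hg : g.natDegree = n) :
    (g.comp (X + 1) - g).coeff (n - 1) = n * g.coeff n := by
  obtain ⟨m, rfl⟩ : ∃ m, n = m + 1 := ⟨n - 1, (Nat.succ_pred_eq_of_pos hn).symm⟩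
  rw [coeff_sub, aux_comp_coeff, hg]
  rw [Finset.sum_range_succ, Finset.sum_range_succ]
  have h0 : ∑ k ∈ range m, g.coeff k * (k.choose (m + 1 - 1) : ℚ) = 0 := by
    refine Finset.sum_eq_zero fun k hk => ?_
    rw [Nat.choose_eq_zero_of_lt (by simpa using Finset.mem_range.mp hk)]; ring
  rw [h0]
  simp [Nat.choose_succ_self_right]
  ring

private lemma catalan_ne_zero (n : ℕ) : catalan n ≠ 0 := by
  induction n using Nat.strong_induction_on with
  | _ n IH =>
    cases n with
    | zero => simp
    | succ m =>
      rw [catalan_succ]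
      intro h
      have h0 := Finset.sum_eq_zero_iff.mp h ⟨0, Nat.succ_pos m⟩ (Finset.mem_univ _)
      simp only [Fin.val_zero, catalan_zero, one_mul, Nat.sub_zero] at h0
      exact IH m (Nat.lt_succ_self m) h0

private lemma aux_catalan_sum {n : ℕ} (hn : 2 ≤ n) :
    ∑ i ∈ Finset.Ico 1 n, ((catalan (i - 1) : ℚ) * (catalan (n - i - 1) : ℚ))
      = catalan (n - 1) := by
  obtain ⟨m, rfl⟩ : ∃ m, n = m + 2 := ⟨n - 2, by omega⟩
  rw [Finset.sum_Ico_eq_sum_range]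
  have hcat : (catalan (m + 2 - 1) : ℚ) = ∑ j ∈ Finset.range (m + 1),
      (catalan j : ℚ) * (catalan (m - j) : ℚ) := by
    rw [show m + 2 - 1 = m + 1 from rfl, catalan_succ]
    push_cast
    rw [Fin.sum_univ_eq_sum_range (fun j => (catalan j : ℚ) * (catalan (m - j) : ℚ))]
  rw [hcat]
  refine Finset.sum_congr rfl fun j hj => ?_
  have e1 : 1 + j - 1 = j := by omega
  have e2 : m + 2 - (1 + j) - 1 = m - j := by omega
  rw [e1, e2]

/-- Key: if `(Ψ := p∘(X+1) + p)` has derivative `S ≠ 0`, then `p` has degree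
`natDegree S + 1` and leading coefficient `lc S / (2 (natDegree S + 1))`. -/
private lemma aux_key (p S : Polynomial ℚ) (hS : S ≠ 0)
    (h : derivative (p.comp (X + 1) + p) = S) :
    p.degree = (S.natDegree + 1 : ℕ) ∧
      p.leadingCoeff = S.leadingCoeff / (2 * (S.natDegree + 1)) := by
  have hd : derivative (p.comp (X + 1)) = (derivative p).comp (X + 1) := by
    rw [derivative_comp]; simp
  set q := derivative p with hqdef
  have hqS : q.comp (X + 1) + q = S := by
    rw [← h, derivative_add, hd]
  have hq0 : q ≠ 0 := by
    rintro hq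
    apply hS
    rw [← hqS, hq, zero_comp, add_zero]
  have hlc : q.leadingCoeff ≠ 0 := leadingCoeff_ne_zero.mpr hq0
  have hdeg_eq : (q.comp (X + 1)).degree = q.degree := aux_comp_degree q
  have hadd_ne : (q.comp (X + 1)).leadingCoeff + q.leadingCoeff ≠ 0 := by
    rw [aux_comp_leadingCoeff]
    intro h'
    apply hlc
    linarith [h']
  have hSdeg : S.degree = q.degree := by
    rw [← hqS, degree_add_eq_of_leadingCoeff_add_ne_zero hadd_ne, hdeg_eq, max_self]
  have hSlc : S.leadingCoeff = 2 * q.leadingCoeff := by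
    rw [← hqS, leadingCoeff_add_of_degree_eq hdeg_eq hadd_ne, aux_comp_leadingCoeff]
    ring
  -- p has positive natDegree
  have hpnd : 0 < p.natDegree := by
    by_contra h'
    push_neg at h'
    have : p.natDegree = 0 := Nat.le_zero.mp h'
    obtain ⟨c, rfl⟩ := natDegree_eq_zero.mp this
    exact hq0 (by simp [hqdef])
  have hqdeg : q.degree = (p.natDegree - 1 : ℕ) := degree_derivative_eq p hpnd
  have hqnd : q.natDegree = p.natDegree - 1 := natDegree_eq_of_degree_eq_some hqdeg
  have hSnd : S.natDegree = p.natDegree - 1 := by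
    rw [natDegree_eq_of_degree_eq_some (hSdeg.trans hqdeg)]
  have hnd : p.natDegree = S.natDegree + 1 := by omega
  have hqlc : q.leadingCoeff = p.leadingCoeff * p.natDegree := by
    rw [leadingCoeff, leadingCoeff, hqnd, hqdef, coeff_derivative]
    have : p.natDegree - 1 + 1 = p.natDegree := by omega
    rw [this]
    push_cast [Nat.cast_sub hpnd]
    ring
  constructor
  · rw [degree_eq_natDegree (fun h' => by simp [h', hqdef] at hq0), hnd]
  · have hcast : (S.natDegree : ℚ) + 1 = p.natDegree := by
      rw [hnd]; push_cast; ring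
    rw [hSlc, hqlc, hcast]
    have hn0 : (p.natDegree : ℚ) ≠ 0 := Nat.cast_ne_zero.mpr (by omega)
    field_simp

/-- With `Φ_0 = 0`, `Ψ_n := Φ_n(X+1) + Φ_n` satisfying `Ψ_1' = 2`,
`Ψ_n' = (T-1) ∑_{i=1}^{n-1} Φ_i Φ_{n-i}` for `n ≥ 2`, and integration constants fixed
by `Φ_n(1) + Φ_n(0) = 0`, each `Φ_n` has degree exactly `n` with leading coefficient
`2^{1-n} C_{n-1}`. -/
theorem phi_degree_leadingCoeff (Φ : ℕ → Polynomial ℚ)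
    (h0 : Φ 0 = 0)
    (h1 : derivative ((Φ 1).comp (X + 1) + Φ 1) = C 2)
    (hrec : ∀ n : ℕ, 2 ≤ n →
      derivative ((Φ n).comp (X + 1) + Φ n)
        = ∑ i ∈ Finset.Ico 1 n,
            ((Φ i * Φ (n - i)).comp (X + 1) - Φ i * Φ (n - i)))
    (hτ : ∀ n : ℕ, 1 ≤ n → (Φ n).eval 1 + (Φ n).eval 0 = 0) :
    ∀ n : ℕ, 1 ≤ n →
      (Φ n).degree = n ∧ (Φ n).leadingCoeff = (2 : ℚ) ^ ((1 : ℤ) - n) * catalan (n - 1) := by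
  intro n
  induction n using Nat.strong_induction_on with
  | _ n IH =>
    intro hn
    rcases eq_or_lt_of_le hn with h1n | h2n
    · -- base case n = 1
      subst h1n
      obtain ⟨hdeg, hlc⟩ := aux_key (Φ 1) (C 2) (C_ne_zero.mpr two_ne_zero) h1
      refine ⟨?_, ?_⟩
      · rw [hdeg]; norm_num
      · rw [hlc]; norm_num
    · -- inductive step, n ≥ 2
      have hn2 : 2 ≤ n := h2n
      set S : Polynomial ℚ := ∑ i ∈ Finset.Ico 1 n,
          ((Φ i * Φ (n - i)).comp (X + 1) - Φ i * Φ (n - i)) with hSdef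
      have IH' : ∀ i, 1 ≤ i → i < n →
          (Φ i).natDegree = i ∧
            (Φ i).leadingCoeff = (2 : ℚ) ^ ((1 : ℤ) - i) * catalan (i - 1) ∧ Φ i ≠ 0 := by
        intro i h1i hin
        obtain ⟨hd, hl⟩ := IH i hin h1i
        refine ⟨natDegree_eq_of_degree_eq_some hd, hl, ?_⟩
        intro h
        rw [h, degree_zero] at hd
        exact (WithBot.bot_ne_coe) hd
      have hgnd : ∀ i ∈ Finset.Ico 1 n, (Φ i * Φ (n - i)).natDegree = n := by
        intro i hi
        obtain ⟨h1i, hin⟩ := Finset.mem_Ico.mp hi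
        obtain ⟨hdi, -, hi0⟩ := IH' i h1i hin
        obtain ⟨hdni, -, hni0⟩ := IH' (n - i) (by omega) (by omega)
        rw [natDegree_mul hi0 hni0, hdi, hdni]
        omega
      have hScoeff_high : ∀ m, n ≤ m → S.coeff m = 0 := by
        intro m hm
        rw [hSdef, finset_sum_coeff]
        exact Finset.sum_eq_zero fun i hi =>
          aux_diff_coeff_high _ (le_trans (le_of_eq (hgnd i hi)) hm)
      have hScoeff : S.coeff (n - 1)
          = (n : ℚ) * ((2 : ℚ) ^ ((2 : ℤ) - n) * catalan (n - 1)) := by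
        rw [hSdef, finset_sum_coeff]
        have hterm : ∀ i ∈ Finset.Ico 1 n,
            ((Φ i * Φ (n - i)).comp (X + 1) - Φ i * Φ (n - i)).coeff (n - 1)
              = (n : ℚ) * ((2 : ℚ) ^ ((2 : ℤ) - n)
                  * ((catalan (i - 1) : ℚ) * (catalan (n - i - 1) : ℚ))) := by
          intro i hi
          obtain ⟨h1i, hin⟩ := Finset.mem_Ico.mp hi
          obtain ⟨hdi, hli, hi0⟩ := IH' i h1i hin
          obtain ⟨hdni, hlni, hni0⟩ := IH' (n - i) (by omega) (by omega)
          rw [aux_diff_coeff_lead _ (by omega) (hgnd i hi)]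
          have hcoe : (Φ i * Φ (n - i)).coeff n = (Φ i * Φ (n - i)).leadingCoeff := by
            rw [leadingCoeff, hgnd i hi]
          rw [hcoe, leadingCoeff_mul, hli, hlni]
          have hz : (2 : ℚ) ^ ((1 : ℤ) - i) * (2 : ℚ) ^ ((1 : ℤ) - (n - i : ℕ))
              = (2 : ℚ) ^ ((2 : ℤ) - n) := by
            rw [← zpow_add₀ (two_ne_zero : (2 : ℚ) ≠ 0)]
            congr 1
            push_cast [Nat.cast_sub (le_of_lt hin)]
            ring
          rw [← hz]
          ring
        rw [Finset.sum_congr rfl hterm, ← Finset.mul_sum, ← Finset.mul_sum,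
          aux_catalan_sum hn2]
      have hc0 : (n : ℚ) * ((2 : ℚ) ^ ((2 : ℤ) - n) * catalan (n - 1)) ≠ 0 := by
        have h1 : (n : ℚ) ≠ 0 := Nat.cast_ne_zero.mpr (by omega)
        have h2 : (2 : ℚ) ^ ((2 : ℤ) - n) ≠ 0 := zpow_ne_zero _ two_ne_zero
        have h3 : (catalan (n - 1) : ℚ) ≠ 0 := Nat.cast_ne_zero.mpr (catalan_ne_zero _)
        positivity
      have hSne : S ≠ 0 := by
        intro h
        apply hc0
        rw [← hScoeff, h, coeff_zero]
      have hSdeg : S.degree = ((n - 1 : ℕ) : WithBot ℕ) := by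
        refine le_antisymm ?_ ?_
        · refine (degree_le_iff_coeff_zero S (n - 1 : ℕ)).mpr fun m hm => ?_
          have : (n - 1 : ℕ) < m := by exact_mod_cast hm
          exact hScoeff_high m (by omega)
        · exact le_degree_of_ne_zero (by rw [hScoeff]; exact hc0)
      have hSnd : S.natDegree = n - 1 := natDegree_eq_of_degree_eq_some hSdeg
      have hSlc : S.leadingCoeff
          = (n : ℚ) * ((2 : ℚ) ^ ((2 : ℤ) - n) * catalan (n - 1)) := by
        rw [leadingCoeff, hSnd, hScoeff]
      obtain ⟨hdeg, hlc⟩ := aux_key (Φ n) S hSne (by rw [hrec n hn2])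
      constructor
      · rw [hdeg, hSnd]
        congr 1
        omega
      · rw [hlc, hSlc, hSnd]
        have hcast : ((n - 1 : ℕ) : ℚ) + 1 = n := by
          push_cast [Nat.cast_sub (by omega : 1 ≤ n)]
          ring
        rw [hcast]
        have h2 : (2 : ℚ) ^ ((2 : ℤ) - n) = 2 * (2 : ℚ) ^ ((1 : ℤ) - n) := by
          rw [show (2 : ℤ) - n = 1 + (1 - n) by ring,
            zpow_add₀ (two_ne_zero : (2 : ℚ) ≠ 0), zpow_one]
        rw [h2]
        have hn0 : (n : ℚ) ≠ 0 := Nat.cast_ne_zero.mpr (by omega)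
        field_simp
end

section
/- The polynomials Φ_n(z) with all parameters τ_i = 0 satisfy the symmetry Φ_n(1 - z) = (-1)^n Φ_n(z) for all n. -/
open Polynomial Finset

private lemma phi_aux_deriv_zero (p : Polynomial ℚ) (hd : derivative p = 0)
    (h0 : p.eval 0 = 0) : p = 0 := by
  obtain ⟨c, rfl⟩ := Polynomial.natDegree_eq_zero.mp
    (Polynomial.natDegree_eq_zero_of_derivative_eq_zero hd)
  simpa using h0

private lemma phi_aux_shift_neg (G : Polynomial ℚ) (h : G.comp (X + 1) = -G) : G = 0 := by
  by_contra hG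
  have hq : ((X + 1 : Polynomial ℚ)).natDegree ≠ 0 := by
    rw [show (X + 1 : Polynomial ℚ) = X + C 1 by simp]
    rw [natDegree_X_add_C]; norm_num
  have h1 : (G.comp (X + 1)).leadingCoeff = G.leadingCoeff := by
    rw [Polynomial.leadingCoeff_comp hq]
    rw [show (X + 1 : Polynomial ℚ) = X + C 1 by simp, leadingCoeff_X_add_C]
    simp
  rw [h, leadingCoeff_neg] at h1
  have : G.leadingCoeff = 0 := by linarith
  exact hG (leadingCoeff_eq_zero.mp this)

private lemma phi_aux_sum_comp (s : Finset ℕ) (f : ℕ → Polynomial ℚ) (q : Polynomial ℚ) :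
    (∑ i ∈ s, f i).comp q = ∑ i ∈ s, (f i).comp q := by
  simp [Polynomial.eval₂_finset_sum, Polynomial.comp]

/-- The polynomials `Φ_n` (with all parameters `τ_i = 0`, i.e. `Φ_n(1) + Φ_n(0) = 0`)
satisfy the Bernoulli-type symmetry `Φ_n(1-z) = (-1)^n Φ_n(z)`. -/
theorem phi_symmetry (Φ : ℕ → Polynomial ℚ)
    (h0 : Φ 0 = 0)
    (h1 : derivative ((Φ 1).comp (X + 1) + Φ 1) = C 2)
    (hrec : ∀ n : ℕ, 2 ≤ n →
      derivative ((Φ n).comp (X + 1) + Φ n)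
        = ∑ i ∈ Finset.Ico 1 n,
            ((Φ i * Φ (n - i)).comp (X + 1) - Φ i * Φ (n - i)))
    (hτ : ∀ n : ℕ, 1 ≤ n → (Φ n).eval 1 + (Φ n).eval 0 = 0) :
    ∀ (n : ℕ) (z : ℚ), (Φ n).eval (1 - z) = (-1 : ℚ) ^ n * (Φ n).eval z := by
  suffices H : ∀ n : ℕ, (Φ n).comp (1 - X) = C ((-1 : ℚ) ^ n) * Φ n by
    intro n z
    have := congrArg (eval z) (H n)
    simpa [eval_comp] using this
  intro n
  induction n using Nat.strong_induction_on with
  | _ n ih =>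
  rcases Nat.eq_zero_or_pos n with rfl | hn1
  · simp [h0]
  -- the polynomial Ψ
  set Ψ : Polynomial ℚ := (Φ n).comp (X + 1) + Φ n with hΨ
  -- key: (derivative Ψ).comp (-X) = -(C ((-1)^n) * derivative Ψ)
  have hkey : (derivative Ψ).comp (-X) = -(C ((-1 : ℚ) ^ n) * derivative Ψ) := by
    rcases Nat.lt_or_ge n 2 with h2 | h2
    · have hne : n = 1 := by omega
      subst hne
      have hd : derivative Ψ = C 2 := h1
      rw [hd]; simp
    · have hd : derivative Ψ = ∑ i ∈ Finset.Ico 1 n,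
          ((Φ i * Φ (n - i)).comp (X + 1) - Φ i * Φ (n - i)) := hrec n h2
      rw [hd, phi_aux_sum_comp, Finset.mul_sum, ← Finset.sum_neg_distrib]
      apply Finset.sum_congr rfl
      intro i hi
      rw [Finset.mem_Ico] at hi
      obtain ⟨hi1, hin⟩ := hi
      have hIH1 : (Φ i).comp (1 - X) = C ((-1 : ℚ) ^ i) * Φ i := ih i hin
      have hIH2 : (Φ (n - i)).comp (1 - X) = C ((-1 : ℚ) ^ (n - i)) * Φ (n - i) :=
        ih (n - i) (by omega)
      set P : Polynomial ℚ := Φ i * Φ (n - i) with hPdef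
      have hsign : (-1 : ℚ) ^ i * (-1 : ℚ) ^ (n - i) = (-1 : ℚ) ^ n := by
        rw [← pow_add]; congr 1; omega
      have hP : P.comp (1 - X) = C ((-1 : ℚ) ^ n) * P := by
        rw [hPdef, mul_comp, hIH1, hIH2, mul_mul_mul_comm, ← C_mul, hsign]
      have hcomp1 : ((1 : Polynomial ℚ) - X).comp (X + 1) = -X := by
        simp [sub_comp]
      have hPneg : P.comp (-X) = C ((-1 : ℚ) ^ n) * P.comp (X + 1) := by
        have : P.comp (-X) = (P.comp (1 - X)).comp (X + 1) := by
          rw [Polynomial.comp_assoc, hcomp1]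
        rw [this, hP, mul_comp, C_comp]
      have hcomp2 : ((X : Polynomial ℚ) + 1).comp (-X) = 1 - X := by
        simp [add_comp]; ring
      rw [sub_comp, Polynomial.comp_assoc, hcomp2, hP, hPneg]
      ring
  -- derivative of the difference vanishes
  have hderiv : derivative (Ψ.comp (-X) - C ((-1 : ℚ) ^ n) * Ψ) = 0 := by
    rw [derivative_sub, Polynomial.derivative_comp, hkey, derivative_C_mul]
    simp only [derivative_neg, derivative_X]
    ring
  -- evaluation at 0 vanishes
  have heval : (Ψ.comp (-X) - C ((-1 : ℚ) ^ n) * Ψ).eval 0 = 0 := by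
    have hΨ0 : Ψ.eval 0 = 0 := by
      rw [hΨ]
      simp [eval_comp]
      have := hτ n hn1
      linarith
    simp [eval_comp, hΨ0]
  have hΨsym : Ψ.comp (-X) = C ((-1 : ℚ) ^ n) * Ψ :=
    sub_eq_zero.mp (phi_aux_deriv_zero _ hderiv heval)
  -- expand Ψ.comp (-X)
  have hcomp2 : ((X : Polynomial ℚ) + 1).comp (-X) = 1 - X := by
    simp [add_comp]; ring
  have hΨexp : (Φ n).comp (1 - X) + (Φ n).comp (-X)
      = C ((-1 : ℚ) ^ n) * ((Φ n).comp (X + 1)) + C ((-1 : ℚ) ^ n) * Φ n := by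
    have := hΨsym
    rw [hΨ] at this
    rw [add_comp, Polynomial.comp_assoc, hcomp2] at this
    rw [this]; ring
  -- the difference G satisfies G.comp (X+1) = -G
  set G : Polynomial ℚ := (Φ n).comp (1 - X) - C ((-1 : ℚ) ^ n) * Φ n with hG
  have hGshift : G.comp (X + 1) = -G := by
    have hcomp1 : ((1 : Polynomial ℚ) - X).comp (X + 1) = -X := by
      simp [sub_comp]
    rw [hG, sub_comp, Polynomial.comp_assoc, hcomp1, mul_comp, C_comp]
    linear_combination hΨexp
  have : G = 0 := phi_aux_shift_neg G hGshift
  rw [hG] at this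
  exact sub_eq_zero.mp this
end
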